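/- arXiv:1404.1059 — 6 statements merged into one kernel-verified Lean document; each statement's English description precedes it below -/
import Mathlib

section
/- Let a set of jobs I be assigned to a machine of speed v > 0 and run consecutively (in any order, without idle time, starting at time 0 or later). Let Φ be the total size of jobs in I and φ the minimum density (weight divided by size) of any job in I. Then the sum over jobs j in I of w_j · (C_j − p_j/(2v)), where C_j is the completion time of j and p_j its size, is at least φ·Φ²/(2v). -/
/-!
Each factor `C_j - p_j / (2v)` is nonnegative, so the densities may be lowered to `φ`, i.e.
`w_j` replaced by `φ p_j`. With `C_j = t0 + S_j / v`, where `S_j` is the total size of the jobs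
up to and including `j`, what remains is the identity `∑ p_j (S_j - p_j / 2) = Φ² / 2`: the
left side is `∫₀^Φ x dx` computed by the midpoint rule on the intervals `[S_j - p_j, S_j]`,
which is exact for a linear integrand.
-/

open Finset

theorem two_mul_sum_mul_sum_filter_le {ι α R : Type*} [Fintype ι] [DecidableEq ι] [LinearOrder α]
    [CommRing R] {r : ι → α} (hr : Function.Injective r) (q : ι → R) :
    2 * ∑ j, q j * ∑ k ∈ univ.filter (fun k => r k ≤ r j), q k
      = (∑ j, q j) ^ 2 + ∑ j, q j ^ 2 := by
  have indicator_add : ∀ j k, ((if r k ≤ r j then 1 else 0) + if r j ≤ r k then 1 else 0 : R)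
      = 1 + if j = k then 1 else 0 := by
    intro j k
    rcases lt_trichotomy (r j) (r k) with h | h | h
    · simp [h.not_ge, h.le, ne_of_apply_ne r h.ne]
    · simp [hr h]
    · simp [h.not_ge, h.le, ne_of_apply_ne r h.ne']
  have sum_eq : ∑ j, q j * ∑ k ∈ univ.filter (fun k => r k ≤ r j), q k
      = ∑ j, ∑ k, q j * q k * if r k ≤ r j then 1 else 0 := by
    simp only [sum_filter, mul_sum, mul_ite, mul_one, mul_zero]
  calc 2 * ∑ j, q j * ∑ k ∈ univ.filter (fun k => r k ≤ r j), q k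
      = ∑ j, ∑ k, q j * q k * ((if r k ≤ r j then 1 else 0) + if r j ≤ r k then 1 else 0) := by
        rw [sum_eq, two_mul]
        nth_rw 2 [sum_comm]
        simp only [← sum_add_distrib, mul_add, mul_comm]
    _ = ∑ j, ∑ k, (q j * q k + if j = k then q j * q k else 0) := by
        simp only [indicator_add, mul_add, mul_ite, mul_one, mul_zero]
    _ = (∑ j, q j) ^ 2 + ∑ j, q j ^ 2 := by
        simp [sum_add_distrib, sq, sum_mul_sum]

theorem sum_mul_sum_filter_le_sub_half {ι α K : Type*} [Fintype ι] [DecidableEq ι] [LinearOrder α]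
    [Field K] [NeZero (2 : K)] {r : ι → α} (hr : Function.Injective r) (q : ι → K) :
    ∑ j, q j * (∑ k ∈ univ.filter (fun k => r k ≤ r j), q k - q j / 2) = (∑ j, q j) ^ 2 / 2 := by
  have expand : ∑ j, q j * (∑ k ∈ univ.filter (fun k => r k ≤ r j), q k - q j / 2)
      = ∑ j, q j * ∑ k ∈ univ.filter (fun k => r k ≤ r j), q k - (∑ j, q j ^ 2) / 2 := by
    simp only [mul_sub, sum_sub_distrib, sum_div, sq, mul_div_assoc]
  rw [expand, eq_div_iff two_ne_zero, sub_mul, div_mul_cancel₀ _ two_ne_zero]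
  linear_combination two_mul_sum_mul_sum_filter_le hr q

/-- jobs of a set run consecutively (in some order `π`) on a machine of
speed `v`, starting at time `t0 ≥ 0`.  If every job has density at least `φ`, then the
sum of the `Γ`-values `w j * (C j - p j / (2 v))` is at least `φ Φ² / (2 v)` where
`Φ` is the total size. -/
theorem sum_gamma_lower_bound (n : ℕ) (p w : Fin n → ℝ) (v φ t0 : ℝ)
    (π : Equiv.Perm (Fin n))
    (hv : 0 < v) (hφ : 0 < φ) (ht0 : 0 ≤ t0)
    (hp : ∀ j, 0 < p j) (hw : ∀ j, φ * p j ≤ w j) :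
    φ * (∑ j, p j) ^ 2 / (2 * v) ≤
      ∑ j, w j *
        ((t0 + (∑ k ∈ univ.filter (fun k => π k ≤ π j), p k) / v) - p j / (2 * v)) := by
  set S : Fin n → ℝ := fun j => ∑ k ∈ univ.filter (fun k => π k ≤ π j), p k
  have le_prefix : ∀ j, p j ≤ S j := fun j =>
    single_le_sum (fun k _ => (hp k).le) (by simp)
  calc φ * (∑ j, p j) ^ 2 / (2 * v)
      ≤ φ * t0 * ∑ j, p j + φ / v * ∑ j, p j * (S j - p j / 2) := by
        rw [sum_mul_sum_filter_le_sub_half π.injective]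
        have start_nonneg : 0 ≤ φ * t0 * ∑ j, p j :=
          mul_nonneg (mul_nonneg hφ.le ht0) (sum_nonneg fun j _ => (hp j).le)
        linarith [start_nonneg, show φ / v * ((∑ j, p j) ^ 2 / 2) = φ * (∑ j, p j) ^ 2 / (2 * v) by ring]
    _ = ∑ j, φ * p j * ((t0 + S j / v) - p j / (2 * v)) := by
        rw [mul_sum, mul_sum, ← sum_add_distrib]
        refine sum_congr rfl fun j _ => ?_
        field_simp
        ring
    _ ≤ ∑ j, w j * ((t0 + S j / v) - p j / (2 * v)) := by
        refine sum_le_sum fun j _ => mul_le_mul_of_nonneg_right (hw j) ?_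
        have half_le : p j / (2 * v) ≤ p j / v :=
          div_le_div_of_nonneg_left (hp j).le hv (by linarith)
        linarith [half_le, div_le_div_of_nonneg_right (le_prefix j) hv.le]
end

section
/- Let OPT and OPT' denote the optimal total weighted completion times for instances A and its rounded instance A' (sizes and weights rounded up, speeds rounded down to powers of 1+δ). Then OPT(A) ≤ OPT'(A') ≤ (1+δ)³·OPT(A). -/
open Finset

/-- size/weight rounded up to the nearest integer power of `1+δ`. -/
noncomputable def rUp (δ x : ℝ) : ℝ := (1 + δ) ^ (⌈Real.logb (1 + δ) x⌉)

/-- speed rounded down to the nearest integer power of `1+δ`. -/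
noncomputable def rDown (δ x : ℝ) : ℝ := (1 + δ) ^ (⌊Real.logb (1 + δ) x⌋)

/-- total weighted completion time of the schedule given by assignment `M` and
per-machine processing order `π` (consecutive processing from time `0`). -/
noncomputable def cost {n m : ℕ} (sz wt : Fin n → ℝ) (sp : Fin m → ℝ)
    (M : Fin n → Fin m) (π : Equiv.Perm (Fin n)) : ℝ :=
  ∑ j, wt j *
    ((∑ k ∈ univ.filter (fun k => M k = M j ∧ π k ≤ π j), sz k) / sp (M j))

/-- optimal cost: infimum over all assignments and per-machine orderings. -/
noncomputable def OPTcost (n m : ℕ) (sz wt : Fin n → ℝ) (sp : Fin m → ℝ) : ℝ :=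
  ⨅ Mπ : (Fin n → Fin m) × Equiv.Perm (Fin n), cost sz wt sp Mπ.1 Mπ.2

/-!
Rounding moves every size and weight up, and every speed down, by a factor of at most `1 + δ`.
The cost of a fixed schedule is monotone in sizes, weights and inverse speeds, so rounding can
only increase it; and the cost is homogeneous of degree three under `sz, wt ↦ c • sz, c • wt`,
`sp ↦ sp / c`, so with `c = 1 + δ` rounding increases it by at most `(1 + δ) ^ 3`. Both
comparisons hold schedule by schedule and therefore pass to the infima.
-/

lemma zpow_eq_rpow_sub_logb_mul {b x : ℝ} (hb : 0 < b) (hb1 : b ≠ 1) (hx : 0 < x) (k : ℤ) :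
    b ^ k = b ^ ((k : ℝ) - Real.logb b x) * x := by
  rw [Real.rpow_sub hb, Real.rpow_logb hb hb1 hx, Real.rpow_intCast, div_mul_cancel₀ _ hx.ne']

section Rounding

variable {δ x : ℝ}

lemma rUp_pos (hδ : 0 < δ) : 0 < rUp δ x :=
  zpow_pos (by linarith) _

lemma rDown_pos (hδ : 0 < δ) : 0 < rDown δ x :=
  zpow_pos (by linarith) _

lemma le_rUp (hδ : 0 < δ) (hx : 0 < x) : x ≤ rUp δ x := by
  rw [rUp, zpow_eq_rpow_sub_logb_mul (by linarith) (by linarith) hx]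
  exact le_mul_of_one_le_left hx.le
    (Real.one_le_rpow (by linarith) (sub_nonneg.2 (Int.le_ceil _)))

lemma rUp_le (hδ : 0 < δ) (hx : 0 < x) : rUp δ x ≤ (1 + δ) * x := by
  rw [rUp, zpow_eq_rpow_sub_logb_mul (by linarith) (by linarith) hx]
  refine mul_le_mul_of_nonneg_right ?_ hx.le
  calc (1 + δ) ^ ((⌈Real.logb (1 + δ) x⌉ : ℝ) - Real.logb (1 + δ) x)
      ≤ (1 + δ) ^ (1 : ℝ) :=
        Real.rpow_le_rpow_of_exponent_le (by linarith)
          (by linarith [Int.ceil_lt_add_one (Real.logb (1 + δ) x)])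
    _ = 1 + δ := Real.rpow_one _

lemma rDown_le (hδ : 0 < δ) (hx : 0 < x) : rDown δ x ≤ x := by
  rw [rDown, zpow_eq_rpow_sub_logb_mul (by linarith) (by linarith) hx]
  exact mul_le_of_le_one_left hx.le
    (Real.rpow_le_one_of_one_le_of_nonpos (by linarith) (sub_nonpos.2 (Int.floor_le _)))

lemma div_le_rDown (hδ : 0 < δ) (hx : 0 < x) : x / (1 + δ) ≤ rDown δ x := by
  rw [rDown, zpow_eq_rpow_sub_logb_mul (by linarith) (by linarith) hx, div_eq_inv_mul,
    ← Real.rpow_neg_one]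
  refine mul_le_mul_of_nonneg_right ?_ hx.le
  exact Real.rpow_le_rpow_of_exponent_le (by linarith)
    (by linarith [Int.lt_floor_add_one (Real.logb (1 + δ) x)])

end Rounding

section Cost

variable {n m : ℕ} {sz wt sz' wt' : Fin n → ℝ} {sp sp' : Fin m → ℝ}

lemma cost_nonneg (hsz : ∀ j, 0 ≤ sz j) (hwt : ∀ j, 0 ≤ wt j) (hsp : ∀ i, 0 ≤ sp i)
    (M : Fin n → Fin m) (π : Equiv.Perm (Fin n)) : 0 ≤ cost sz wt sp M π :=
  sum_nonneg fun j _ =>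
    mul_nonneg (hwt j) (div_nonneg (sum_nonneg fun k _ => hsz k) (hsp _))

lemma cost_mono (hsz0 : ∀ j, 0 ≤ sz j) (hsz : ∀ j, sz j ≤ sz' j)
    (hwt0 : ∀ j, 0 ≤ wt j) (hwt : ∀ j, wt j ≤ wt' j)
    (hsp'0 : ∀ i, 0 < sp' i) (hsp : ∀ i, sp' i ≤ sp i)
    (M : Fin n → Fin m) (π : Equiv.Perm (Fin n)) :
    cost sz wt sp M π ≤ cost sz' wt' sp' M π := by
  unfold cost
  gcongr with j _ k _
  case h₁ => exact hwt j
  case h => exact hsz k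
  case hdb => exact hsp _
  case hd => exact hsp'0 _
  case b0 => exact (hwt0 j).trans (hwt j)
  case hc => exact sum_nonneg fun k _ => (hsz0 k).trans (hsz k)
  case c0 => exact div_nonneg (sum_nonneg fun k _ => hsz0 k) ((hsp'0 _).le.trans (hsp _))

lemma cost_scale (c : ℝ) (M : Fin n → Fin m) (π : Equiv.Perm (Fin n)) :
    cost (fun j => c * sz j) (fun j => c * wt j) (fun i => sp i / c) M π
      = c ^ 3 * cost sz wt sp M π := by
  rw [cost, cost, mul_sum]
  refine sum_congr rfl fun j _ => ?_
  rw [← mul_sum, div_div_eq_mul_div]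
  ring

lemma OPTcost_mono (hsz : ∀ j, 0 ≤ sz j) (hwt : ∀ j, 0 ≤ wt j) (hsp : ∀ i, 0 ≤ sp i)
    (h : ∀ M π, cost sz wt sp M π ≤ cost sz' wt' sp' M π) :
    OPTcost n m sz wt sp ≤ OPTcost n m sz' wt' sp' :=
  ciInf_mono ⟨0, by rintro _ ⟨Mπ, rfl⟩; exact cost_nonneg hsz hwt hsp _ _⟩ fun Mπ => h Mπ.1 Mπ.2

lemma OPTcost_scale {c : ℝ} (hc : 0 ≤ c) :
    OPTcost n m (fun j => c * sz j) (fun j => c * wt j) (fun i => sp i / c)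
      = c ^ 3 * OPTcost n m sz wt sp := by
  simp only [OPTcost, cost_scale, Real.mul_iInf_of_nonneg (pow_nonneg hc 3)]

end Cost

theorem opt_rounding_general (n m : ℕ) (δ : ℝ) (hδ0 : 0 < δ)
    (a ω : Fin n → ℝ) (v : Fin m → ℝ)
    (ha : ∀ j, 0 < a j) (hω : ∀ j, 0 < ω j) (hv : ∀ i, 0 < v i) :
    OPTcost n m a ω v ≤
        OPTcost n m (fun j => rUp δ (a j)) (fun j => rUp δ (ω j)) (fun i => rDown δ (v i)) ∧
      OPTcost n m (fun j => rUp δ (a j)) (fun j => rUp δ (ω j)) (fun i => rDown δ (v i)) ≤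
        (1 + δ) ^ 3 * OPTcost n m a ω v := by
  constructor
  · exact OPTcost_mono (fun j => (ha j).le) (fun j => (hω j).le) (fun i => (hv i).le)
      (cost_mono (fun j => (ha j).le) (fun j => le_rUp hδ0 (ha j))
        (fun j => (hω j).le) (fun j => le_rUp hδ0 (hω j))
        (fun _ => rDown_pos hδ0) (fun i => rDown_le hδ0 (hv i)))
  · rw [← OPTcost_scale (by linarith)]
    exact OPTcost_mono (fun _ => (rUp_pos hδ0).le) (fun _ => (rUp_pos hδ0).le)
      (fun _ => (rDown_pos hδ0).le)
      (cost_mono (fun _ => (rUp_pos hδ0).le) (fun j => rUp_le hδ0 (ha j))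
        (fun _ => (rUp_pos hδ0).le) (fun j => rUp_le hδ0 (hω j))
        (fun i => div_pos (hv i) (by linarith)) (fun i => div_le_rDown hδ0 (hv i)))

/-- `OPT(A) ≤ OPT'(A') ≤ (1+δ)³ OPT(A)` for the rounded instance. -/
theorem opt_rounding (n m : ℕ) (hm : 0 < m) (δ : ℝ) (hδ0 : 0 < δ) (hδ8 : δ ≤ 1 / 8)
    (a ω : Fin n → ℝ) (v : Fin m → ℝ)
    (ha : ∀ j, 0 < a j) (hω : ∀ j, 0 < ω j) (hv : ∀ i, 0 < v i) :
    OPTcost n m a ω v ≤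
        OPTcost n m (fun j => rUp δ (a j)) (fun j => rUp δ (ω j)) (fun i => rDown δ (v i)) ∧
      OPTcost n m (fun j => rUp δ (a j)) (fun j => rUp δ (ω j)) (fun i => rDown δ (v i)) ≤
        (1 + δ) ^ 3 * OPTcost n m a ω v :=
  opt_rounding_general n m δ hδ0 a ω v ha hω hv
end

section
/- Let SOL be a feasible schedule for instance A (with release dates ρ_j ≥ 0, sizes a_j, speeds v_i ≤ 1) and let A' be the rounded instance with release dates r'_j = (1+δ)^{⌈log_{1+δ}(ρ_j+β)⌉} where β = δ²·min_j a_j, sizes p_j = (1+δ)^{⌈log_{1+δ} a_j⌉}, and speeds s_i = (1+δ)^{⌊log_{1+δ} v_i⌋}. If υ ≥ (1+δ)³ and 0 < δ ≤ 1/36, then TA(SOL, υ) is a feasible schedule for A', and moreover it is timely: every job j starts no earlier than δ·p_j/s_i on its machine i. -/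
open Finset

/-- feasibility of a schedule with release dates `ρ`, sizes `a`, speeds `v`. -/
def Feasible (n m : ℕ) (ρ a : Fin n → ℝ) (v : Fin m → ℝ)
    (M : Fin n → Fin m) (C : Fin n → ℝ) : Prop :=
  (∀ j, ρ j + a j / v (M j) ≤ C j) ∧
    ∀ j k, j ≠ k → M j = M k →
      C j ≤ C k - a k / v (M k) ∨ C k ≤ C j - a j / v (M j)

/-! Rounding to a power of `1 + δ` moves a positive number by at most a factor `1 + δ`, so the
rounded processing time `p_j / s_i` is at most `(1 + δ)²` times the original one. Stretching
the schedule by `υ ≥ (1 + δ)³` therefore leaves room for the longer jobs, keeps jobs on one machine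
apart, and absorbs both the rounded release date `r'_j ≤ (1 + δ) ρ_j + (1 + δ) δ² a_j / v_i`
(as `min a ≤ a_j ≤ a_j / v_i`) and the offset `δ p_j / s_i` demanded by timeliness. -/

section Rounding

variable {δ x : ℝ}

lemma rUp_lt_mul (hδ : 0 < δ) (hx : 0 < x) : rUp δ x < (1 + δ) * x := by
  have hb : 1 < 1 + δ := by linarith
  have hlt : ((⌈Real.logb (1 + δ) x⌉ - 1 : ℤ) : ℝ) < Real.logb (1 + δ) x := by
    push_cast; linarith [Int.ceil_lt_add_one (Real.logb (1 + δ) x)]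
  rw [Real.lt_logb_iff_rpow_lt hb hx, Real.rpow_intCast, zpow_sub_one₀ (by positivity)] at hlt
  rw [rUp]
  calc (1 + δ) ^ ⌈Real.logb (1 + δ) x⌉
      = (1 + δ) * ((1 + δ) ^ ⌈Real.logb (1 + δ) x⌉ * (1 + δ)⁻¹) := by field_simp
    _ < (1 + δ) * x := by gcongr

lemma div_lt_rDown (hδ : 0 < δ) (hx : 0 < x) : x / (1 + δ) < rDown δ x := by
  have hb : 1 < 1 + δ := by linarith
  have hlt : Real.logb (1 + δ) x < ((⌊Real.logb (1 + δ) x⌋ + 1 : ℤ) : ℝ) := by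
    push_cast; exact Int.lt_floor_add_one _
  rw [Real.logb_lt_iff_lt_rpow hb hx, Real.rpow_intCast, zpow_add_one₀ (by positivity)] at hlt
  rw [div_lt_iff₀ (by positivity), rDown]
  exact hlt

lemma rUp_div_rDown_le {a v : ℝ} (hδ : 0 < δ) (ha : 0 < a) (hv : 0 < v) :
    rUp δ a / rDown δ v ≤ (1 + δ) ^ 2 * (a / v) :=
  calc rUp δ a / rDown δ v ≤ (1 + δ) * a / (v / (1 + δ)) :=
        div_le_div₀ (by positivity) (rUp_lt_mul hδ ha).le (by positivity) (div_lt_rDown hδ hv).le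
    _ = (1 + δ) ^ 2 * (a / v) := by field_simp

lemma rUp_add_sq_mul_le {ρ β q : ℝ} (hδ : 0 < δ) (hρ : 0 ≤ ρ) (hβ : 0 < β) (hβq : β ≤ q) :
    rUp δ (ρ + δ ^ 2 * β) ≤ (1 + δ) * ρ + (1 + δ) * δ ^ 2 * q := by
  have hpos : 0 < ρ + δ ^ 2 * β := by positivity
  have := mul_le_mul_of_nonneg_left hβq (sq_nonneg δ)
  nlinarith [rUp_lt_mul hδ hpos]

end Rounding

lemma Feasible.timeAugment {n m : ℕ} {ρ a : Fin n → ℝ} {v : Fin m → ℝ} {M : Fin n → Fin m}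
    {C : Fin n → ℝ} (h : Feasible n m ρ a v M C) {ρ' a' : Fin n → ℝ} {v' : Fin m → ℝ} {υ : ℝ}
    (hυ : 0 ≤ υ) (hrelease : ∀ j, ρ' j + a' j / v' (M j) ≤ υ * C j)
    (hproc : ∀ j, a' j / v' (M j) ≤ υ * (a j / v (M j))) :
    Feasible n m ρ' a' v' M (fun j => υ * C j) := by
  have stretch : ∀ j k, C j ≤ C k - a k / v (M k) → υ * C j ≤ υ * C k - a' k / v' (M k) :=
    fun j k hjk => by linarith [mul_le_mul_of_nonneg_left hjk hυ, hproc k]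
  exact ⟨hrelease, fun j k hjk hM => (h.2 j k hjk hM).imp (stretch j k) (stretch k j)⟩

theorem time_augmented_feasible_rounded_general (n m : ℕ) (δ : ℝ)
    (hδ0 : 0 < δ)
    (ρ a : Fin n → ℝ) (v : Fin m → ℝ)
    (hρ : ∀ j, 0 ≤ ρ j) (ha : ∀ j, 0 < a j) (hv : ∀ i, 0 < v i) (hv1 : ∀ i, v i ≤ 1)
    (amin : ℝ) (hmin : ∀ j, amin ≤ a j) (hach : ∃ j, a j = amin)
    (M : Fin n → Fin m) (C : Fin n → ℝ)
    (hfeas : Feasible n m ρ a v M C)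
    (υ : ℝ) (hυ : (1 + δ) ^ 3 ≤ υ) :
    Feasible n m (fun j => rUp δ (ρ j + δ ^ 2 * amin)) (fun j => rUp δ (a j))
        (fun i => rDown δ (v i)) M (fun j => υ * C j) ∧
      ∀ j, δ * rUp δ (a j) / rDown δ (v (M j)) ≤
        υ * C j - rUp δ (a j) / rDown δ (v (M j)) := by
  obtain ⟨j₀, rfl⟩ := hach
  have hυ₀ : 0 ≤ υ := le_trans (by positivity) hυ
  have hq : ∀ j, 0 < a j / v (M j) := fun j => div_pos (ha j) (hv _)
  have hproc : ∀ j, rUp δ (a j) / rDown δ (v (M j)) ≤ (1 + δ) ^ 2 * (a j / v (M j)) :=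
    fun j => rUp_div_rDown_le hδ0 (ha j) (hv _)
  have hrelease : ∀ j, rUp δ (ρ j + δ ^ 2 * a j₀) ≤
      (1 + δ) * ρ j + (1 + δ) * δ ^ 2 * (a j / v (M j)) := fun j =>
    rUp_add_sq_mul_le hδ0 (hρ j) (ha j₀) ((hmin j).trans (le_div_self (ha j).le (hv _) (hv1 _)))
  have hcompl : ∀ j, (1 + δ) ^ 3 * (ρ j + a j / v (M j)) ≤ υ * C j := fun j =>
    mul_le_mul hυ (hfeas.1 j) (add_pos_of_nonneg_of_pos (hρ j) (hq j)).le hυ₀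
  refine ⟨hfeas.timeAugment hυ₀ (fun j => ?_) (fun j => ?_), fun j => ?_⟩
  · have hρ' : (1 + δ) * ρ j ≤ (1 + δ) ^ 3 * ρ j :=
      mul_le_mul_of_nonneg_right (le_self_pow₀ (by linarith) (by norm_num)) (hρ j)
    have hq' : 0 ≤ (1 + δ) * δ * (a j / v (M j)) := by have := hq j; positivity
    linarith [hrelease j, hproc j, hcompl j]
  · have hq' : 0 ≤ (1 + δ) ^ 2 * δ * (a j / v (M j)) := by have := hq j; positivity
    linarith [hproc j, mul_le_mul_of_nonneg_right hυ (hq j).le]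
  · have hρ' : 0 ≤ (1 + δ) ^ 3 * ρ j := by have := hρ j; positivity
    rw [mul_div_assoc]
    nlinarith [hproc j, hcompl j, hq j]

/-- if `SOL` is feasible for `A` and `υ ≥ (1+δ)³` with `0 < δ ≤ 1/36`,
then `TA(SOL,υ)` is feasible for the rounded instance `A'` (release dates
`(1+δ)^{⌈log(ρ_j+β)⌉}` with `β = δ²·min_j a_j`, sizes rounded up, speeds rounded
down), and it is timely: every job `j` starts no earlier than `δ p_j / s_{M j}`. -/
theorem time_augmented_feasible_rounded (n m : ℕ) (δ : ℝ)
    (hδ0 : 0 < δ) (hδ : δ ≤ 1 / 36)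
    (ρ a : Fin n → ℝ) (v : Fin m → ℝ)
    (hρ : ∀ j, 0 ≤ ρ j) (ha : ∀ j, 0 < a j) (hv : ∀ i, 0 < v i) (hv1 : ∀ i, v i ≤ 1)
    (amin : ℝ) (hmin : ∀ j, amin ≤ a j) (hach : ∃ j, a j = amin)
    (M : Fin n → Fin m) (C : Fin n → ℝ)
    (hfeas : Feasible n m ρ a v M C)
    (υ : ℝ) (hυ : (1 + δ) ^ 3 ≤ υ) :
    Feasible n m (fun j => rUp δ (ρ j + δ ^ 2 * amin)) (fun j => rUp δ (a j))
        (fun i => rDown δ (v i)) M (fun j => υ * C j) ∧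
      ∀ j, δ * rUp δ (a j) / rDown δ (v (M j)) ≤
        υ * C j - rUp δ (a j) / rDown δ (v (M j)) :=
  time_augmented_feasible_rounded_general n m δ hδ0 ρ a v hρ ha hv hv1 amin hmin hach M C hfeas υ hυ
end

section
/- Fix δ with 0 < δ ≤ 1/8 and define the division of a job of size (1+δ)^i as follows: let k_i be the integer with 2^{k_i}·(1+δ)^i ∈ (1,2], and k'_i = ⌈log_{1+δ} 2^{k_i}⌉ + i. Then 1 ≤ k'_i ≤ Δ where Δ = ⌈log_{1+δ} 2⌉, and the pseudo-size π_i = (1+δ)^{k'_i}/2^{k_i} satisfies (1+δ)^i ≤ π_i < (1+δ)^{i+1}. Moreover, any two distinct pseudo-sizes of the same division k' differ by a multiplicative factor that is an integer power of 2 (the larger divides the smaller into a power of 2), i.e., pseudo-sizes within a division form a divisible sequence. -/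
/-!
Write `x = 2^k` and `b = 1 + δ`, so that the division is `⌈log_b x⌉ + i = ⌈log_b (x b^i)⌉`.
The hypothesis `1 < x b^i ≤ 2` places `log_b (x b^i)` in `(0, log_b 2]`, which gives the
range of the division. Rounding `log_b x` up multiplies `x` by a factor in `[1, b)`, which
gives the bounds on the pseudo-size. Finally, within a division the numerators `b^{k'}`
coincide, so two pseudo-sizes differ by the ratio of their denominators, a power of `2`.
-/

namespace Real

variable {b x : ℝ}

lemma one_le_zpow_ceil_logb_div (hb : 1 < b) (hx : 0 < x) : 1 ≤ b ^ ⌈logb b x⌉ / x := by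
  rw [one_le_div hx, ← rpow_intCast]
  calc x = b ^ logb b x := (rpow_logb (by linarith) hb.ne' hx).symm
    _ ≤ b ^ (⌈logb b x⌉ : ℝ) := rpow_le_rpow_of_exponent_le hb.le (Int.le_ceil _)

lemma zpow_ceil_logb_div_lt (hb : 1 < b) (hx : 0 < x) : b ^ ⌈logb b x⌉ / x < b := by
  rw [div_lt_iff₀ hx, ← rpow_intCast]
  calc b ^ (⌈logb b x⌉ : ℝ) < b ^ (logb b x + 1) :=
        rpow_lt_rpow_of_exponent_lt hb (Int.ceil_lt_add_one _)
    _ = b * x := by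
      rw [rpow_add (by linarith), rpow_logb (by linarith) hb.ne' hx, rpow_one, mul_comm]

lemma logb_mul_zpow_self (hb : 1 < b) (hx : 0 < x) (i : ℤ) :
    logb b (x * b ^ i) = logb b x + i := by
  have hb0 : 0 < b := by linarith
  rw [logb_mul hx.ne' (zpow_pos hb0 i).ne', ← rpow_intCast, logb_rpow hb0 hb.ne']

lemma ceil_logb_add_mem_Icc {y : ℝ} (hb : 1 < b) (hx : 0 < x) {i : ℤ}
    (h1 : 1 < x * b ^ i) (h2 : x * b ^ i ≤ y) :
    ⌈logb b x⌉ + i ∈ Set.Icc 1 ⌈logb b y⌉ := by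
  rw [← Int.ceil_add_intCast, ← logb_mul_zpow_self hb hx]
  exact ⟨Int.one_le_ceil_iff.mpr (logb_pos hb h1),
    Int.ceil_mono (logb_le_logb_of_le hb (by linarith) h2)⟩

lemma zpow_ceil_logb_add_div_mem_Ico (hb : 1 < b) (hx : 0 < x) (i : ℤ) :
    b ^ (⌈logb b x⌉ + i) / x ∈ Set.Ico (b ^ i) (b ^ (i + 1)) := by
  have hb0 : 0 < b := by linarith
  rw [zpow_add_one₀ hb0.ne', zpow_add₀ hb0.ne', mul_div_right_comm]
  refine ⟨le_mul_of_one_le_left (zpow_pos hb0 i).le (one_le_zpow_ceil_logb_div hb hx), ?_⟩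
  rw [mul_comm _ b]
  exact mul_lt_mul_of_pos_right (zpow_ceil_logb_div_lt hb hx) (zpow_pos hb0 i)

end Real

theorem division_pseudo_size_general (δ : ℝ) (hδ0 : 0 < δ)
    (i k : ℤ) (hk1 : 1 < (2 : ℝ) ^ k * (1 + δ) ^ i) (hk2 : (2 : ℝ) ^ k * (1 + δ) ^ i ≤ 2)
    (j l : ℤ)
    (hsame : ⌈Real.logb (1 + δ) ((2 : ℝ) ^ k)⌉ + i = ⌈Real.logb (1 + δ) ((2 : ℝ) ^ l)⌉ + j) :
    (1 ≤ ⌈Real.logb (1 + δ) ((2 : ℝ) ^ k)⌉ + i) ∧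
    (⌈Real.logb (1 + δ) ((2 : ℝ) ^ k)⌉ + i ≤ ⌈Real.logb (1 + δ) 2⌉) ∧
    ((1 + δ) ^ i ≤ (1 + δ) ^ (⌈Real.logb (1 + δ) ((2 : ℝ) ^ k)⌉ + i) / (2 : ℝ) ^ k) ∧
    ((1 + δ) ^ (⌈Real.logb (1 + δ) ((2 : ℝ) ^ k)⌉ + i) / (2 : ℝ) ^ k < (1 + δ) ^ (i + 1)) ∧
    (∃ c : ℤ, (1 + δ) ^ (⌈Real.logb (1 + δ) ((2 : ℝ) ^ k)⌉ + i) / (2 : ℝ) ^ k =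
      (2 : ℝ) ^ c * ((1 + δ) ^ (⌈Real.logb (1 + δ) ((2 : ℝ) ^ l)⌉ + j) / (2 : ℝ) ^ l)) := by
  have hb : 1 < 1 + δ := by linarith
  have hx : (0 : ℝ) < 2 ^ k := zpow_pos two_pos k
  obtain ⟨hdiv_pos, hdiv_le⟩ := Real.ceil_logb_add_mem_Icc hb hx hk1 hk2
  obtain ⟨hpseudo_ge, hpseudo_lt⟩ := Real.zpow_ceil_logb_add_div_mem_Ico hb hx i
  refine ⟨hdiv_pos, hdiv_le, hpseudo_ge, hpseudo_lt, l - k, ?_⟩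
  rw [← hsame, zpow_sub₀ two_ne_zero]
  field_simp

/-- divisions and pseudo-sizes.  For a job size `(1+δ)^i`, with `k` the
integer such that `2^k (1+δ)^i ∈ (1,2]`, the division `k' = ⌈log_{1+δ} 2^k⌉ + i`
satisfies `1 ≤ k' ≤ Δ = ⌈log_{1+δ} 2⌉`, the pseudo-size `π_i = (1+δ)^{k'}/2^k`
satisfies `(1+δ)^i ≤ π_i < (1+δ)^{i+1}`, and any two pseudo-sizes of a common
division differ by a multiplicative factor that is an integer power of `2`. -/
theorem division_pseudo_size (δ : ℝ) (hδ0 : 0 < δ) (hδ8 : δ ≤ 1 / 8)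
    (i k : ℤ) (hk1 : 1 < (2 : ℝ) ^ k * (1 + δ) ^ i) (hk2 : (2 : ℝ) ^ k * (1 + δ) ^ i ≤ 2)
    (j l : ℤ) (hl1 : 1 < (2 : ℝ) ^ l * (1 + δ) ^ j) (hl2 : (2 : ℝ) ^ l * (1 + δ) ^ j ≤ 2)
    (hsame : ⌈Real.logb (1 + δ) ((2 : ℝ) ^ k)⌉ + i = ⌈Real.logb (1 + δ) ((2 : ℝ) ^ l)⌉ + j) :
    (1 ≤ ⌈Real.logb (1 + δ) ((2 : ℝ) ^ k)⌉ + i) ∧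
    (⌈Real.logb (1 + δ) ((2 : ℝ) ^ k)⌉ + i ≤ ⌈Real.logb (1 + δ) 2⌉) ∧
    ((1 + δ) ^ i ≤ (1 + δ) ^ (⌈Real.logb (1 + δ) ((2 : ℝ) ^ k)⌉ + i) / (2 : ℝ) ^ k) ∧
    ((1 + δ) ^ (⌈Real.logb (1 + δ) ((2 : ℝ) ^ k)⌉ + i) / (2 : ℝ) ^ k < (1 + δ) ^ (i + 1)) ∧
    (∃ c : ℤ, (1 + δ) ^ (⌈Real.logb (1 + δ) ((2 : ℝ) ^ k)⌉ + i) / (2 : ℝ) ^ k =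
      (2 : ℝ) ^ c * ((1 + δ) ^ (⌈Real.logb (1 + δ) ((2 : ℝ) ^ l)⌉ + j) / (2 : ℝ) ^ l)) :=
  division_pseudo_size_general δ hδ0 i k hk1 hk2 j l hsame
end

section
/- Suppose all jobs released at each time r have, on each machine of speed s_ℓ, total selected size per density at most (s_ℓ·δ·r)/δ^{23} = s_ℓ·r/δ^{22}. If the input contains at most ŷ densities, then all jobs of modified release date r can be scheduled (each machine processing its selected jobs consecutively) within a time window [t, t + r·ŷ/δ^{22}) for any t ≥ r. Moreover, all jobs of the ŷ densities with modified release date at most r can be scheduled within a window [t, t + r·ŷ·(1+δ)/δ^{23}) for any t > r. -/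
open Finset

/-- Reindexing by `q ↦ q₀ - q` turns the sum into part of the geometric series in `a⁻¹`. -/
theorem sum_zpow_le_of_forall_le {a : ℝ} (ha : 1 < a) {q₀ : ℤ} {T : Finset ℤ}
    (hT : ∀ q ∈ T, q ≤ q₀) : ∑ q ∈ T, a ^ q ≤ a ^ q₀ * (a / (a - 1)) := by
  have ha0 : 0 < a := by linarith
  have hx0 : 0 ≤ a⁻¹ := by positivity
  have hx1 : a⁻¹ < 1 := inv_lt_one_of_one_lt₀ ha
  have hinj : Set.InjOn (fun q : ℤ => (q₀ - q).toNat) T := by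
    intro p hp q hq h
    have := hT p hp
    have := hT q hq
    simp only at h
    omega
  have hreindex : ∑ q ∈ T, a ^ q = a ^ q₀ * ∑ n ∈ T.image (fun q => (q₀ - q).toNat), a⁻¹ ^ n := by
    rw [sum_image hinj, mul_sum]
    refine sum_congr rfl fun q hq => ?_
    rw [← zpow_natCast, Int.toNat_of_nonneg (by linarith [hT q hq]), inv_zpow',
      ← zpow_add₀ ha0.ne']
    ring_nf
  calc ∑ q ∈ T, a ^ q
      ≤ a ^ q₀ * ∑' n : ℕ, a⁻¹ ^ n := by
        rw [hreindex]
        gcongr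
        exact (summable_geometric_of_lt_one hx0 hx1).sum_le_tsum _ fun _ _ => by positivity
    _ = a ^ q₀ * (a / (a - 1)) := by
        rw [tsum_geometric_of_lt_one hx0 hx1]
        field_simp

theorem sum_div_le_card_mul {ι : Type*} [Fintype ι] {f : ι → ℝ} {s c : ℝ} (hs : 0 < s)
    (hf : ∀ i, f i ≤ s * c) : (∑ i, f i) / s ≤ Fintype.card ι * c := by
  rw [div_le_iff₀ hs]
  calc ∑ i, f i ≤ ∑ _i : ι, s * c := sum_le_sum fun i _ => hf i
    _ = Fintype.card ι * c * s := by rw [sum_const, card_univ, nsmul_eq_mul]; ring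

theorem schedule_release_date_window_general (δ s r t : ℝ) (yhat : ℕ)
    (hδ : 0 < δ) (hs : 0 < s)
    (P : Fin yhat → ℝ) (hP : ∀ d, P d ≤ s * r / δ ^ 22)
    (q₀ : ℤ) (hrq : r = (1 + δ) ^ q₀)
    (T : Finset ℤ) (hT : ∀ q ∈ T, q ≤ q₀)
    (Q : Fin yhat → ℤ → ℝ)
    (hQ : ∀ d q, Q d q ≤ s * (1 + δ) ^ q / δ ^ 22) :
    (t + (∑ d, P d) / s ≤ t + r * yhat / δ ^ 22) ∧
      ∀ t' : ℝ, r < t' →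
        t' + (∑ d, ∑ q ∈ T, Q d q) / s ≤ t' + r * yhat * (1 + δ) / δ ^ 23 := by
  have hgeom : ∑ q ∈ T, (1 + δ) ^ q ≤ r * ((1 + δ) / δ) := by
    simpa [hrq] using sum_zpow_le_of_forall_le (by linarith : (1 : ℝ) < 1 + δ) hT
  have hdensity (d : Fin yhat) : ∑ q ∈ T, Q d q ≤ s * (r * (1 + δ) / δ ^ 23) :=
    calc ∑ q ∈ T, Q d q ≤ ∑ q ∈ T, s / δ ^ 22 * (1 + δ) ^ q :=
          sum_le_sum fun q _ => (hQ d q).trans_eq (by ring)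
      _ = s / δ ^ 22 * ∑ q ∈ T, (1 + δ) ^ q := (mul_sum ..).symm
      _ ≤ s / δ ^ 22 * (r * ((1 + δ) / δ)) := by gcongr
      _ = s * (r * (1 + δ) / δ ^ 23) := by field_simp
  refine ⟨add_le_add_right ?_ t, fun t' _ => add_le_add_right ?_ t'⟩
  · calc (∑ d, P d) / s ≤ yhat * (r / δ ^ 22) := by
          simpa using sum_div_le_card_mul hs fun d => (hP d).trans_eq (mul_div_assoc s r _)
      _ = r * yhat / δ ^ 22 := by ring
  · calc (∑ d, ∑ q ∈ T, Q d q) / s ≤ yhat * (r * (1 + δ) / δ ^ 23) := by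
          simpa using sum_div_le_card_mul hs hdensity
      _ = r * yhat * (1 + δ) / δ ^ 23 := by ring

/-- with at most `yhat` densities, if the total selected size of jobs of
each density released at `r` on a machine of speed `s` is at most `s·r/δ²²`, then all
these jobs can be processed consecutively within the window `[t, t + r·yhat/δ²²)` for any
`t ≥ r`.  Moreover, the jobs of the `yhat` densities with (modified) release date at most
`r = (1+δ)^{q₀}` (release dates are powers of `1+δ`), each release date `(1+δ)^q`
contributing per density at most `s·(1+δ)^q/δ²²`, fit within
`[t', t' + r·yhat(1+δ)/δ²³)` for any `t' > r`. -/
theorem schedule_release_date_window (δ s r t : ℝ) (yhat : ℕ)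
    (hδ : 0 < δ) (hs : 0 < s) (hr : 0 < r) (ht : r ≤ t)
    (P : Fin yhat → ℝ) (hP0 : ∀ d, 0 ≤ P d) (hP : ∀ d, P d ≤ s * r / δ ^ 22)
    (q₀ : ℤ) (hrq : r = (1 + δ) ^ q₀)
    (T : Finset ℤ) (hT : ∀ q ∈ T, q ≤ q₀)
    (Q : Fin yhat → ℤ → ℝ) (hQ0 : ∀ d q, 0 ≤ Q d q)
    (hQ : ∀ d q, Q d q ≤ s * (1 + δ) ^ q / δ ^ 22) :
    (t + (∑ d, P d) / s ≤ t + r * yhat / δ ^ 22) ∧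
      ∀ t' : ℝ, r < t' →
        t' + (∑ d, ∑ q ∈ T, Q d q) / s ≤ t' + r * yhat * (1 + δ) / δ ^ 23 :=
  schedule_release_date_window_general δ s r t yhat hδ hs P hP q₀ hrq T hT Q hQ
end

section
/- Suppose for each i the schedule sol_k delays job set S_{i,ℓ} (ℓ ≥ 1) by an additive time at most Ψ/δ^{8ℓ}, the total size of S_{i,ℓ} is at most (1+δ)Ψ, every job of S_{i,ℓ} has density at most d_i/(1+δ)^{ŷℓ} where d_i is the minimum density in S_{i,0}, and the cost of S_{i,0} satisfies c_{i,0} ≥ (Ψ/5)·d_i·(Ψ/2). If ŷ ≥ 1/δ^{12} and 0 < δ ≤ 1/36, then the total extra cost Σ_{ℓ≥1} c_{i,ℓ} ≤ Σ_{ℓ≥1} (1+δ)Ψ·d_i·(1+δ)^{−ŷℓ}·Ψ·δ^{−8ℓ} is at most δ·c_{i,0}. -/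
/-! Each delayed set costs at most `K · rˡ` with `K = (1+δ)Ψ²d` and
`r = 1/((1+δ)^ŷ δ⁸)`. Bernoulli's inequality gives `(1+δ)^ŷ ≥ ŷδ ≥ 1/δ¹¹`, so `r ≤ δ³`, and the
geometric tail `K r/(1-r)` is at most `K δ²`, which is at most `δ c₀` since `c₀ ≥ Ψ²d/10`. -/

lemma one_div_pow_le_one_add_pow {δ : ℝ} (hδ : 0 < δ) {n y : ℕ}
    (hy : 1 / δ ^ (n + 1) ≤ y) : 1 / δ ^ n ≤ (1 + δ) ^ y :=
  calc 1 / δ ^ n = 1 / δ ^ (n + 1) * δ := by field_simp; ring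
    _ ≤ y * δ := by gcongr
    _ ≤ 1 + y * δ := by linarith
    _ ≤ (1 + δ) ^ y := one_add_mul_le_pow (by linarith) y

lemma tsum_succ_le_of_le_geometric {c : ℕ → ℝ} {K r : ℝ} (hr0 : 0 ≤ r) (hr1 : r < 1)
    (hc0 : ∀ n, 0 ≤ c n) (hc : ∀ n, 1 ≤ n → c n ≤ K * r ^ n) :
    ∑' n, c (n + 1) ≤ K * (r / (1 - r)) := by
  have hbound : ∀ n, c (n + 1) ≤ K * r * r ^ n := fun n => by
    simpa [pow_succ', mul_assoc] using hc (n + 1) (Nat.le_add_left 1 n)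
  have hgeom : Summable fun n => K * r * r ^ n :=
    (summable_geometric_of_lt_one hr0 hr1).mul_left _
  calc ∑' n, c (n + 1) ≤ ∑' n, K * r * r ^ n :=
        (hgeom.of_nonneg_of_le (fun n => hc0 _) hbound).tsum_le_tsum hbound hgeom
    _ = K * (r / (1 - r)) := by
        rw [tsum_mul_left, tsum_geometric_of_lt_one hr0 hr1, div_eq_mul_inv, mul_assoc]

lemma div_one_sub_le_sq_of_le_cube {r δ : ℝ} (hr : r ≤ δ ^ 3) (hδ0 : 0 ≤ δ) (hδ : δ ≤ 1 / 2) :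
    r / (1 - r) ≤ δ ^ 2 := by
  have hδ3 : δ ^ 3 ≤ 1 / 8 := by
    calc δ ^ 3 ≤ (1 / 2) ^ 3 := by gcongr
      _ = 1 / 8 := by norm_num
  rw [div_le_iff₀ (by linarith)]
  nlinarith [pow_nonneg hδ0 2, pow_nonneg hδ0 3]

theorem delayed_sets_cost_bound_general (δ Ψ d c0 : ℝ) (yhat : ℕ) (c : ℕ → ℝ)
    (hδ0 : 0 < δ) (hδ : δ ≤ 1 / 36) (hyhat : 1 / δ ^ 12 ≤ (yhat : ℝ))
    (hd : 0 < d)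
    (hc0 : Ψ / 5 * d * (Ψ / 2) ≤ c0)
    (hcnn : ∀ ℓ, 0 ≤ c ℓ)
    (hc : ∀ ℓ : ℕ, 1 ≤ ℓ →
      c ℓ ≤ (1 + δ) * Ψ * d * (1 / (1 + δ) ^ (yhat * ℓ)) * (Ψ / δ ^ (8 * ℓ))) :
    ∑' ℓ : ℕ, c (ℓ + 1) ≤ δ * c0 := by
  set r := 1 / ((1 + δ) ^ yhat * δ ^ 8)
  set K := (1 + δ) * Ψ ^ 2 * d
  have hr : r ≤ δ ^ 3 := by
    have h11 : 1 / δ ^ 11 ≤ (1 + δ) ^ yhat := one_div_pow_le_one_add_pow hδ0 hyhat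
    rw [div_le_iff₀ (by positivity)]
    calc 1 = 1 / δ ^ 11 * δ ^ 11 := by field_simp
      _ ≤ (1 + δ) ^ yhat * δ ^ 11 := by gcongr
      _ = δ ^ 3 * ((1 + δ) ^ yhat * δ ^ 8) := by ring
  have hcK : ∀ ℓ, 1 ≤ ℓ → c ℓ ≤ K * r ^ ℓ := fun ℓ hℓ => by
    convert hc ℓ hℓ using 1
    simp only [K, r, div_pow, one_pow, mul_pow, ← pow_mul]
    field_simp
  calc ∑' ℓ, c (ℓ + 1) ≤ K * (r / (1 - r)) :=
        tsum_succ_le_of_le_geometric (by positivity)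
          (hr.trans_lt (pow_lt_one₀ hδ0.le (by linarith) (by norm_num))) hcnn hcK
    _ ≤ K * δ ^ 2 := by
        gcongr
        exact div_one_sub_le_sq_of_le_cube hr hδ0.le (by linarith)
    _ = (1 + δ) * δ * (Ψ ^ 2 * d * δ) := by ring
    _ ≤ 1 / 10 * (Ψ ^ 2 * d * δ) := by gcongr; nlinarith
    _ = δ * (Ψ / 5 * d * (Ψ / 2)) := by ring
    _ ≤ δ * c0 := by gcongr

/-- delayed job sets `S_{i,ℓ}` (`ℓ ≥ 1`) with total size at most
`(1+δ)Ψ`, densities at most `d_i/(1+δ)^{yhatℓ}`, delayed by at most `Ψ/δ^{8ℓ}`, incur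
total extra cost `Σ_{ℓ≥1} c_{i,ℓ} ≤ δ·c_{i,0}`, given `c_{i,0} ≥ (Ψ/5)d_i(Ψ/2)`,
`yhat ≥ 1/δ¹²` and `0 < δ ≤ 1/36`. -/
theorem delayed_sets_cost_bound (δ Ψ d c0 : ℝ) (yhat : ℕ) (c : ℕ → ℝ)
    (hδ0 : 0 < δ) (hδ : δ ≤ 1 / 36) (hyhat : 1 / δ ^ 12 ≤ (yhat : ℝ))
    (hΨ : 0 < Ψ) (hd : 0 < d)
    (hc0 : Ψ / 5 * d * (Ψ / 2) ≤ c0)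
    (hcnn : ∀ ℓ, 0 ≤ c ℓ)
    (hc : ∀ ℓ : ℕ, 1 ≤ ℓ →
      c ℓ ≤ (1 + δ) * Ψ * d * (1 / (1 + δ) ^ (yhat * ℓ)) * (Ψ / δ ^ (8 * ℓ))) :
    ∑' ℓ : ℕ, c (ℓ + 1) ≤ δ * c0 :=
  delayed_sets_cost_bound_general δ Ψ d c0 yhat c hδ0 hδ hyhat hd hc0 hcnn hc
end
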